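/- arXiv:1008.5046 — 8 statements merged into one kernel-verified Lean document; each statement's English description precedes it below -/
import Mathlib

section
/- For all real x with 0 < x < π, the series ∑_{n=1}^∞ (1/n) sin(nx) cos^n(x) converges to π/2 − x. -/
/-!
With `z = cos x · e^{ix}` we have `‖z‖ = |cos x| < 1`, and the series is the imaginary part of
`∑ zⁿ/n = -log (1 - z)`, i.e. `-arg (1 - z)`. Since `1 - z = sin x · e^{i(x - π/2)}` with
`sin x > 0`, this argument is `x - π/2`.
-/

open Real

open Complex in
theorem hasSum_one_div_mul_sin_mul_pow (r θ : ℝ) (hr : |r| < 1) :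
    HasSum (fun n : ℕ => (1 / (n + 1 : ℝ)) * Real.sin ((n + 1 : ℝ) * θ) * r ^ (n + 1))
      (-arg (1 - r * exp (θ * I))) := by
  have hz : ‖(r : ℂ) * exp (θ * I)‖ < 1 := by
    rwa [norm_mul, norm_exp_ofReal_mul_I, mul_one, norm_real, Real.norm_eq_abs]
  convert hasSum_im (hasSum_taylorSeries_neg_log' hz) using 1
  · ext n
    have hexp : ((n + 1 : ℕ) : ℂ) * (θ * I) = (((n + 1 : ℝ) * θ : ℝ) : ℂ) * I := by
      push_cast; ring
    rw [mul_pow, ← Complex.exp_nat_mul, ← ofReal_pow, hexp,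
      show ((n : ℂ) + 1) = ((n + 1 : ℝ) : ℂ) by push_cast; ring, div_ofReal_im,
      im_ofReal_mul, exp_ofReal_mul_I_im]
    ring
  · rw [neg_im, log_im]

open Complex in
theorem one_sub_cos_mul_exp_mul_I (x : ℝ) :
    1 - Real.cos x * exp (x * I) = Real.sin x * exp (((x - π / 2 : ℝ) : ℂ) * I) := by
  rw [exp_mul_I, exp_mul_I, ← ofReal_cos, ← ofReal_sin, ← ofReal_cos, ← ofReal_sin,
    Real.cos_sub_pi_div_two, Real.sin_sub_pi_div_two]
  push_cast
  linear_combination -Complex.sin_sq_add_cos_sq (x : ℂ)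

open Complex in
theorem arg_one_sub_cos_mul_exp_mul_I {x : ℝ} (hx0 : 0 < x) (hxπ : x < π) :
    arg (1 - Real.cos x * exp (x * I)) = x - π / 2 := by
  rw [one_sub_cos_mul_exp_mul_I, arg_real_mul _ (sin_pos_of_pos_of_lt_pi hx0 hxπ),
    arg_exp_mul_I, toIocMod_eq_self]
  constructor <;> linarith

theorem stmt_0 (x : ℝ) (hx0 : 0 < x) (hxπ : x < π) :
    HasSum (fun n : ℕ => (1 / (n + 1 : ℝ)) * Real.sin ((n + 1 : ℝ) * x) * Real.cos x ^ (n + 1))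
      (π / 2 - x) := by
  have hcos : |Real.cos x| < 1 := by
    have hsin := sin_pos_of_pos_of_lt_pi hx0 hxπ
    rw [← sq_lt_one_iff_abs_lt_one]
    nlinarith [sin_sq_add_cos_sq x]
  convert hasSum_one_div_mul_sin_mul_pow _ _ hcos using 1
  rw [arg_one_sub_cos_mul_exp_mul_I hx0 hxπ]
  ring
end

section
/- For all real t with −π/3 < ωt < π/3, the series ∑_{n=1}^∞ (−1)^{n−1}/((3n−1)(3n+1)) · cos(3nωt) converges to (√3 π/9) cos(ωt) − 1/2. -/
/-!
The `2π`-periodic extension of `y ↦ cos (a y)` from `[-π, π]` is continuous (cosine is even) and,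
for `a ∉ ℤ`, has Fourier coefficients `(-1)ⁿ a sin (aπ) / (π (a² - n²)) = O(n⁻²)`. Its Fourier
series therefore converges pointwise, and pairing the terms `±n` gives the classical expansion
`cos (a x) = (2a sin (aπ) / π) (1 / (2a²) + ∑ₙ (-1)ⁿ cos (n x) / (a² - n²))` for `-π ≤ x < π`.
The theorem is the case `a = 1/3`, `x = 3ωt`.
-/

open Real

lemma integral_exp_ofReal_mul_I (b L : ℝ) (hb : b ≠ 0) :
    ∫ x in -L..L, Complex.exp (b * x * Complex.I) = ((2 * Real.sin (b * L) / b : ℝ) : ℂ) := by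
  have hbI : (b : ℂ) * Complex.I ≠ 0 := mul_ne_zero (Complex.ofReal_ne_zero.2 hb) Complex.I_ne_zero
  simp_rw [mul_right_comm _ _ Complex.I]
  rw [integral_exp_mul_complex hbI, show (b : ℂ) * Complex.I * L = (b * L : ℝ) * Complex.I by
    push_cast; ring, show (b : ℂ) * Complex.I * ((-L : ℝ) : ℂ) = (-(b * L) : ℝ) * Complex.I by
    push_cast; ring, Complex.exp_mul_I, Complex.exp_mul_I]
  push_cast
  rw [Complex.cos_neg, Complex.sin_neg]
  field_simp
  ring

/-- The `n`-th Fourier coefficient of `y ↦ cos (a y)` on `[-π, π]` when `a ∉ ℤ`. -/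
noncomputable def cosFourierCoeff (a : ℝ) (n : ℤ) : ℝ :=
  (-1) ^ n * a * Real.sin (a * π) / (π * (a ^ 2 - n ^ 2))

lemma cosFourierCoeff_neg (a : ℝ) (n : ℤ) : cosFourierCoeff a (-n) = cosFourierCoeff a n := by
  rw [cosFourierCoeff, cosFourierCoeff, zpow_neg, ← inv_zpow, inv_neg, inv_one, Int.cast_neg,
    neg_sq]

lemma fourierCoeffOn_cos_mul {a : ℝ} (ha : ∀ n : ℤ, a ≠ n) (n : ℤ) :
    fourierCoeffOn (by linarith [pi_pos] : -π < -π + 2 * π)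
      (fun y : ℝ => (Real.cos (a * y) : ℂ)) n = cosFourierCoeff a n := by
  have hsub : a - n ≠ 0 := sub_ne_zero.2 (ha n)
  have hadd : a + n ≠ 0 := by
    rw [← sub_neg_eq_add, sub_ne_zero]; exact_mod_cast ha (-n)
  have hsplit : ∀ y : ℝ, fourier (-n) (y : AddCircle (π - -π)) • (Real.cos (a * y) : ℂ)
      = (Complex.exp ((a - n : ℝ) * y * Complex.I)
          + Complex.exp ((-(a + n) : ℝ) * y * Complex.I)) / 2 := by
    intro y
    rw [fourier_coe_apply, smul_eq_mul, Complex.ofReal_cos, Complex.cos, mul_div_assoc',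
      mul_add, ← Complex.exp_add, ← Complex.exp_add]
    have : (π : ℂ) ≠ 0 := Complex.ofReal_ne_zero.2 pi_ne_zero
    congr 3 <;> push_cast <;> field_simp <;> ring
  rw [fourierCoeffOn_eq_integral, show -π + 2 * π = π by ring]
  simp_rw [hsplit]
  rw [intervalIntegral.integral_div, intervalIntegral.integral_add
      (Continuous.intervalIntegrable (by fun_prop) _ _)
      (Continuous.intervalIntegrable (by fun_prop) _ _),
    integral_exp_ofReal_mul_I _ _ hsub, integral_exp_ofReal_mul_I _ _ (neg_ne_zero.2 hadd),
    Complex.real_smul]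
  have hs1 : Real.sin ((a - n) * π) = (-1) ^ n * Real.sin (a * π) := by
    rw [sub_mul, sin_sub_int_mul_pi]
  have hs2 : Real.sin (-(a + n) * π) = -((-1) ^ n * Real.sin (a * π)) := by
    rw [neg_mul, Real.sin_neg, add_mul, sin_add_int_mul_pi]
  have hcoeff : 1 / (π - -π) * ((2 * ((-1) ^ n * Real.sin (a * π)) / (a - n)
      + 2 * -((-1) ^ n * Real.sin (a * π)) / -(a + n)) / 2) = cosFourierCoeff a n := by
    have hsq : a ^ 2 - n ^ 2 ≠ 0 := by
      rw [sq_sub_sq, mul_comm]; exact mul_ne_zero hsub hadd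
    rw [cosFourierCoeff]
    field_simp
    ring
  rw [hs1, hs2, ← hcoeff]
  push_cast
  ring

lemma summable_cosFourierCoeff (a : ℝ) : Summable (cosFourierCoeff a) := by
  have hinv : Summable fun n : ℤ => (a ^ 2 - n ^ 2 : ℝ)⁻¹ := by
    refine Complex.summable_ofReal.mp
      ((EisensteinSeries.summable_linear_sub_mul_linear_add a 1 1).congr fun n => ?_)
    push_cast
    ring
  refine .of_norm_bounded (hinv.norm.mul_left |a * Real.sin (a * π) / π|) fun n => ?_
  have hn : cosFourierCoeff a n = (-1) ^ n * (a * Real.sin (a * π) / π * (a ^ 2 - n ^ 2)⁻¹) := by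
    simp only [cosFourierCoeff, div_eq_mul_inv, mul_inv]
    ring
  rw [hn, norm_mul, norm_mul, norm_zpow, norm_neg, norm_one, one_zpow, one_mul, Real.norm_eq_abs]

lemma hasSum_two_mul_cos_of_hasSum_exp {c : ℤ → ℝ} (hc : ∀ n, c (-n) = c n) {x : ℝ} {s : ℂ}
    (h : HasSum (fun n : ℤ => (c n : ℂ) * Complex.exp (n * x * Complex.I)) s) :
    HasSum (fun n : ℕ => 2 * c (n + 1) * Real.cos ((n + 1) * x)) (s.re - c 0) := by
  have hfold := Complex.hasSum_re ((hasSum_nat_add_iff' 1).mpr h.nat_add_neg)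
  convert hfold using 1
  · funext n
    rw [← Complex.ofReal_intCast, ← Complex.ofReal_intCast, ← Complex.ofReal_mul,
      ← Complex.ofReal_mul, Complex.add_re, Complex.re_ofReal_mul, Complex.re_ofReal_mul,
      Complex.exp_ofReal_mul_I_re, Complex.exp_ofReal_mul_I_re, hc]
    push_cast
    rw [neg_mul, Real.cos_neg]
    ring
  · simp

lemma hasSum_cosFourierCoeff_mul_exp {a : ℝ} (ha : ∀ n : ℤ, a ≠ n) {x : ℝ}
    (hx : x ∈ Set.Ico (-π) π) :
    HasSum (fun n : ℤ => (cosFourierCoeff a n : ℂ) * Complex.exp (n * x * Complex.I))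
      (Real.cos (a * x)) := by
  have : Fact (0 < 2 * π) := ⟨two_pi_pos⟩
  have hπ : -π + 2 * π = π := by ring
  let F : C(AddCircle (2 * π), ℂ) :=
    ⟨AddCircle.liftIco (2 * π) (-π) fun y => (Real.cos (a * y) : ℂ),
      AddCircle.liftIco_continuous (by simp only [hπ, mul_neg, Real.cos_neg]) (by fun_prop)⟩
  have hcoeff : fourierCoeff F = fun n => (cosFourierCoeff a n : ℂ) :=
    funext fun n => (fourierCoeff_liftIco_eq _ n).trans (fourierCoeffOn_cos_mul ha n)
  have hF := has_pointwise_sum_fourier_series_of_summable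
    (hcoeff ▸ Complex.summable_ofReal.2 (summable_cosFourierCoeff a)) (x : AddCircle (2 * π))
  convert hF using 1
  · funext n
    rw [hcoeff, fourier_coe_apply, smul_eq_mul]
    have : (π : ℂ) ≠ 0 := Complex.ofReal_ne_zero.2 pi_ne_zero
    congr 2
    push_cast
    field_simp
  · have hx' : x ∈ Set.Ico (-π) (-π + 2 * π) := by rwa [hπ]
    exact (AddCircle.liftIco_coe_apply (f := fun y => (Real.cos (a * y) : ℂ)) hx').symm

theorem hasSum_cos_mul_div_sq_sub_sq {a : ℝ} (ha : ∀ n : ℤ, a ≠ n) {x : ℝ}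
    (hx : x ∈ Set.Ico (-π) π) :
    HasSum (fun n : ℕ => (-1) ^ n * Real.cos ((n + 1) * x) / ((n + 1) ^ 2 - a ^ 2))
      (π * Real.cos (a * x) / (2 * a * Real.sin (a * π)) - 1 / (2 * a ^ 2)) := by
  have h := hasSum_two_mul_cos_of_hasSum_exp (cosFourierCoeff_neg a)
    (hasSum_cosFourierCoeff_mul_exp ha hx)
  rw [Complex.ofReal_re] at h
  have ha0 : a ≠ 0 := by exact_mod_cast ha 0
  have hsin : Real.sin (a * π) ≠ 0 := by
    rw [Ne, Real.sin_eq_zero_iff]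
    rintro ⟨n, hn⟩
    exact ha n (mul_right_cancel₀ pi_ne_zero hn).symm
  have hsum : π * Real.cos (a * x) / (2 * a * Real.sin (a * π)) - 1 / (2 * a ^ 2)
      = π / (2 * a * Real.sin (a * π)) * (Real.cos (a * x) - cosFourierCoeff a 0) := by
    rw [cosFourierCoeff, zpow_zero, Int.cast_zero, zero_pow two_ne_zero, sub_zero, one_mul,
      mul_sub, div_mul_div_comm]
    congr 1
    · ring
    · field_simp
  rw [hsum]
  refine (h.mul_left _).congr_fun fun n => ?_
  have hsq : a ^ 2 - (n + 1 : ℝ) ^ 2 ≠ 0 := by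
    have h₁ := ha (n + 1)
    have h₂ := ha (-(n + 1))
    push_cast at h₁ h₂
    rw [sq_sub_sq]
    exact mul_ne_zero (fun h => h₂ (by linarith)) (fun h => h₁ (by linarith))
  have hsq' : (n + 1 : ℝ) ^ 2 - a ^ 2 ≠ 0 := by rwa [← neg_sub, neg_ne_zero]
  rw [cosFourierCoeff, zpow_add_one₀ (by norm_num), zpow_natCast]
  push_cast
  field_simp
  ring

theorem stmt_1 (ω t : ℝ) (h1 : -(π / 3) < ω * t) (h2 : ω * t < π / 3) :
    HasSum (fun n : ℕ =>
      (-1 : ℝ) ^ n / ((3 * (n + 1 : ℝ) - 1) * (3 * (n + 1 : ℝ) + 1)) *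
        Real.cos (3 * (n + 1 : ℝ) * (ω * t)))
      (Real.sqrt 3 * π / 9 * Real.cos (ω * t) - 1 / 2) := by
  have hthird : ∀ n : ℤ, (1 / 3 : ℝ) ≠ n := by
    intro n h
    have : (3 * n : ℤ) = 1 := by exact_mod_cast (by rw [← h]; norm_num : (3 * n : ℝ) = 1)
    omega
  have h := (hasSum_cos_mul_div_sq_sub_sq hthird (x := 3 * (ω * t))
    ⟨by linarith, by linarith⟩).mul_left (1 / 9)
  have hsum : Real.sqrt 3 * π / 9 * Real.cos (ω * t) - 1 / 2 = 1 / 9 *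
      (π * Real.cos (1 / 3 * (3 * (ω * t))) / (2 * (1 / 3) * Real.sin (1 / 3 * π))
        - 1 / (2 * (1 / 3) ^ 2)) := by
    have h3 : Real.sqrt 3 ^ 2 = 3 := Real.sq_sqrt (by norm_num)
    rw [show 1 / 3 * π = π / 3 by ring, sin_pi_div_three,
      show 1 / 3 * (3 * (ω * t)) = ω * t by ring]
    field_simp
    linear_combination (2 * π * Real.cos (ω * t)) * h3
  rw [hsum]
  refine h.congr_fun fun n => ?_
  rw [show (n + 1 : ℝ) ^ 2 - (1 / 3) ^ 2 = (3 * (n + 1) - 1) * (3 * (n + 1) + 1) / 9 by ring,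
    show (n + 1 : ℝ) * (3 * (ω * t)) = 3 * (n + 1) * (ω * t) by ring, div_div_eq_mul_div]
  ring
end

section
/- For every positive integer r and every real x with 0 ≤ x ≤ 2π, ∑_{n=1}^∞ cos(nx)/n^{2r} = ∑_{k=0}^{r−1} (−1)^k x^{2k} ζ(2r−2k)/(2k)! + (−1)^r ( (π/2)·x^{2r−1}/(2r−1)! − (1/2)·x^{2r}/(2r)! ). -/
/-!
For `y = x / (2π) ∈ [0, 1]` the Fourier expansion of the Bernoulli polynomial gives
`∑ cos(n x) / n^(2r) = (-1)^(r+1) (2π)^(2r) / (2 (2r)!) · B_{2r}(y)`.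
Expanding `B_{2r}(y) = ∑ C(2r, i) B_i y^(2r-i)`, the odd Bernoulli numbers vanish except
`B_1 = -1/2`, which produces the `x^(2r-1)` term, while Euler's formula
`ζ(2j) = (-1)^(j+1) (2π)^(2j) B_{2j} / (2 (2j)!)` turns each even term into a zeta value.
-/

open Real

/-- The Riemann zeta function at natural arguments `s > 1`, as a real series. -/
noncomputable def zetaR (s : ℕ) : ℝ := ∑' n : ℕ, 1 / (n + 1 : ℝ) ^ s

open scoped Nat

lemma Finset.sum_range_two_mul {M : Type*} [AddCommMonoid M] (f : ℕ → M) (m : ℕ) :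
    ∑ i ∈ Finset.range (2 * m), f i = ∑ j ∈ Finset.range m, (f (2 * j) + f (2 * j + 1)) := by
  induction m with
  | zero => simp
  | succ m ih =>
    rw [Nat.mul_succ, Finset.sum_range_succ, Finset.sum_range_succ, ih, Finset.sum_range_succ,
      add_assoc]

lemma Finset.sum_range_two_mul_add_one_of_odd {M : Type*} [AddCommMonoid M] {f : ℕ → M} {m : ℕ}
    (hm : m ≠ 0) (hf : ∀ j, j ≠ 0 → f (2 * j + 1) = 0) :
    ∑ i ∈ Finset.range (2 * m + 1), f i = f 0 + f 1 + ∑ j ∈ Finset.range m, f (2 * (j + 1)) := by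
  have hodd : ∑ j ∈ Finset.range m, f (2 * j + 1) = f 1 :=
    Finset.sum_eq_single_of_mem 0 (Finset.mem_range.2 (Nat.pos_of_ne_zero hm))
      fun j _ hj => hf j hj
  rw [Finset.sum_range_succ', Finset.sum_range_two_mul, Finset.sum_add_distrib, hodd,
    add_comm _ (f 0), add_assoc]
  rfl

theorem HasSum.comp_succ_of_eq_zero {G : Type*} [AddCommGroup G] [TopologicalSpace G]
    [IsTopologicalAddGroup G] {f : ℕ → G} {a : G} (hf : HasSum f a) (h0 : f 0 = 0) :
    HasSum (fun n => f (n + 1)) a := by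
  simpa [h0] using (hasSum_nat_add_iff' 1).2 hf

lemma zetaR_two_mul {k : ℕ} (hk : k ≠ 0) :
    zetaR (2 * k) = (-1) ^ (k + 1) * (2 * π) ^ (2 * k) * bernoulli (2 * k) / (2 * (2 * k)!) := by
  have h := (hasSum_zeta_nat hk).comp_succ_of_eq_zero (by simp [hk])
  push_cast at h
  have h2 : (2 : ℝ) ^ (2 * k) = 2 * 2 ^ (2 * k - 1) := by rw [← pow_succ']; congr 1; omega
  rw [zetaR, h.tsum_eq, mul_pow, h2]
  field_simp

lemma Polynomial.eval_map_bernoulli (n : ℕ) (y : ℝ) :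
    ((Polynomial.bernoulli n).map (algebraMap ℚ ℝ)).eval y =
      ∑ i ∈ Finset.range (n + 1), (_root_.bernoulli i : ℝ) * n.choose i * y ^ (n - i) := by
  simp [Polynomial.bernoulli]

lemma bernoulli_term_eq_zetaR {j : ℕ} (hj : j ≠ 0) (k : ℕ) (x : ℝ) :
    (-1) ^ (j + k + 1) * (2 * π) ^ (2 * (j + k)) / 2 / (2 * (j + k))! *
      ((bernoulli (2 * j) : ℝ) * (2 * (j + k)).choose (2 * j) * (x / (2 * π)) ^ (2 * k)) =
    (-1) ^ k * x ^ (2 * k) * zetaR (2 * j) / (2 * k)! := by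
  have hchoose : ((2 * j + 2 * k).choose (2 * j) : ℝ) * (2 * j)! * (2 * k)! = (2 * j + 2 * k)! := by
    have h := Nat.add_choose_mul_factorial_mul_factorial (2 * k) (2 * j)
    rw [add_comm (2 * k), mul_right_comm] at h
    exact_mod_cast h
  have hchoose_ne : ((2 * j + 2 * k).choose (2 * j) : ℝ) ≠ 0 := by
    exact_mod_cast (Nat.choose_pos (Nat.le_add_right _ _)).ne'
  rw [zetaR_two_mul hj, mul_add, pow_add, pow_add, ← hchoose, div_pow]
  field_simp
  ring

lemma bernoulli_leading_terms_eq {r : ℕ} (hr : r ≠ 0) (x : ℝ) :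
    (-1) ^ (r + 1) * (2 * π) ^ (2 * r) / 2 / (2 * r)! *
      ((x / (2 * π)) ^ (2 * r) +
        (bernoulli 1 : ℝ) * (2 * r).choose 1 * (x / (2 * π)) ^ (2 * r - 1)) =
    (-1) ^ r * (π / 2 * x ^ (2 * r - 1) / (2 * r - 1)! - 1 / 2 * x ^ (2 * r) / (2 * r)!) := by
  obtain ⟨s, rfl⟩ := Nat.exists_eq_succ_of_ne_zero hr
  have h2 : 2 * (s + 1) = 2 * s + 1 + 1 := by ring
  rw [h2, Nat.add_sub_cancel, bernoulli_one, Nat.choose_one_right, Nat.factorial_succ, div_pow,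
    div_pow]
  push_cast
  field_simp
  ring

lemma bernoulli_cos_value_eq_zetaR_expansion {r : ℕ} (hr : r ≠ 0) (x : ℝ) :
    (-1) ^ (r + 1) * (2 * π) ^ (2 * r) / 2 / (2 * r)! *
        ((Polynomial.bernoulli (2 * r)).map (algebraMap ℚ ℝ)).eval (x / (2 * π)) =
      (∑ k ∈ Finset.range r, (-1) ^ k * x ^ (2 * k) * zetaR (2 * r - 2 * k) / (2 * k)!) +
        (-1) ^ r * (π / 2 * x ^ (2 * r - 1) / (2 * r - 1)! - 1 / 2 * x ^ (2 * r) / (2 * r)!) := by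
  have hodd (j : ℕ) (hj : j ≠ 0) : (bernoulli (2 * j + 1) : ℝ) = 0 := by
    rw [bernoulli_eq_zero_of_odd (odd_two_mul_add_one j) (by omega), Rat.cast_zero]
  rw [Polynomial.eval_map_bernoulli,
    Finset.sum_range_two_mul_add_one_of_odd hr fun j hj => by simp [hodd j hj],
    mul_add, Finset.mul_sum, ← Finset.sum_range_reflect _ r, add_comm]
  -- after reflection, the `k`-th zeta term faces the Bernoulli term of index `2 (r - k)`
  congr 1
  · refine Finset.sum_congr rfl fun j hj => ?_
    obtain ⟨k, rfl⟩ := Nat.exists_eq_add_of_lt (Finset.mem_range.1 hj)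
    rw [show j + k + 1 - 1 - j = k by omega, show 2 * (j + k + 1) - 2 * j = 2 * (k + 1) by omega,
      show 2 * (j + k + 1) - 2 * (k + 1) = 2 * j by omega,
      ← bernoulli_term_eq_zetaR k.succ_ne_zero, show k + 1 + j = j + k + 1 by omega]
  · simpa using bernoulli_leading_terms_eq hr x

theorem stmt_2 (r : ℕ) (hr : 0 < r) (x : ℝ) (hx0 : 0 ≤ x) (hx : x ≤ 2 * π) :
    HasSum (fun n : ℕ => Real.cos ((n + 1 : ℝ) * x) / (n + 1 : ℝ) ^ (2 * r))
      ((∑ k ∈ Finset.range r,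
          (-1 : ℝ) ^ k * x ^ (2 * k) * zetaR (2 * r - 2 * k) / (Nat.factorial (2 * k)))
        + (-1 : ℝ) ^ r *
          (π / 2 * x ^ (2 * r - 1) / (Nat.factorial (2 * r - 1))
            - 1 / 2 * x ^ (2 * r) / (Nat.factorial (2 * r)))) := by
  have hy : x / (2 * π) ∈ Set.Icc (0 : ℝ) 1 :=
    ⟨by positivity, (div_le_one (by positivity)).2 hx⟩
  have h := (hasSum_one_div_nat_pow_mul_cos hr.ne' hy).comp_succ_of_eq_zero (by simp [hr.ne'])
  rw [bernoulli_cos_value_eq_zetaR_expansion hr.ne'] at h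
  refine h.congr_fun fun n => ?_
  push_cast
  field_simp
end

section
/- For every complex s with Re(s) > 1, ∑_{n=1}^∞ cos(nπ/3)/n^s = (1/2)(6^{1−s} − 3^{1−s} − 2^{1−s} + 1) ζ(s). -/
open Real Complex

lemma base (s : ℂ) (hs : 1 < s.re) :
    HasSum (fun n : ℕ => 1 / ((n : ℂ) + 1) ^ s) (riemannZeta s) := by
  have hsum : Summable (fun n : ℕ => 1 / ((n : ℂ) + 1) ^ s) := by
    have := (Complex.summable_one_div_nat_cpow (p := s)).mpr hs
    have h2 := (summable_nat_add_iff 1).mpr this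
    simpa using h2
  have := hsum.hasSum
  rwa [← zeta_eq_tsum_one_div_nat_add_one_cpow hs] at this

lemma auxdiv (s : ℂ) (hs : 1 < s.re) (d : ℕ) (hd : 0 < d) :
    HasSum (fun n : ℕ => if d ∣ (n + 1) then 1 / ((n : ℂ) + 1) ^ s else 0)
      (1 / (d : ℂ) ^ s * riemannZeta s) := by
  set f : ℕ → ℂ := fun n => if d ∣ (n + 1) then 1 / ((n : ℂ) + 1) ^ s else 0
  have hj : Function.Injective (fun k : ℕ => d * (k + 1) - 1) := by
    intro a b h
    simp only at h
    have ha : 1 ≤ d * (a + 1) := Nat.mul_pos hd (Nat.succ_pos a)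
    have hb : 1 ≤ d * (b + 1) := Nat.mul_pos hd (Nat.succ_pos b)
    have h' : d * (a + 1) = d * (b + 1) := by omega
    have := Nat.eq_of_mul_eq_mul_left hd h'
    omega
  rw [← Function.Injective.hasSum_iff hj]
  · have hcomp : (f ∘ fun k : ℕ => d * (k + 1) - 1) =
        fun k : ℕ => 1 / (d : ℂ) ^ s * (1 / ((k : ℂ) + 1) ^ s) := by
      funext k
      have h1 : d * (k + 1) - 1 + 1 = d * (k + 1) := by
        have h0 : 0 < d * (k + 1) := Nat.mul_pos hd (Nat.succ_pos k); omega
      simp only [f, Function.comp_apply, h1, if_pos (Dvd.intro _ rfl)]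
      have h2 : ((d * (k + 1) - 1 : ℕ) : ℂ) + 1 = ((d : ℝ) * ((k : ℝ) + 1) : ℝ) := by
        rw [Nat.cast_sub (Nat.mul_pos hd (Nat.succ_pos k))]
        push_cast; ring
      rw [h2, Complex.ofReal_mul,
        mul_cpow_ofReal_nonneg (by positivity) (by positivity), one_div_mul_one_div]
      push_cast
      ring
    rw [hcomp]
    exact (base s hs).mul_left _
  · intro n hn
    simp only [f]
    rw [if_neg]
    rintro ⟨m, hm⟩
    apply hn
    rcases m with _ | m
    · omega
    · exact ⟨m, by simp only; omega⟩

lemma key (n : ℕ) :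
    (Real.cos (((n : ℝ) + 1) * π / 3) : ℂ) =
      3 * (if 6 ∣ (n + 1) then 1 else 0) - (3 / 2) * (if 3 ∣ (n + 1) then 1 else 0)
        - (if 2 ∣ (n + 1) then 1 else 0) + 1 / 2 := by
  obtain ⟨q, r, hr, h⟩ : ∃ q r, r < 6 ∧ n + 1 = 6 * q + r :=
    ⟨(n + 1) / 6, (n + 1) % 6, Nat.mod_lt _ (by norm_num), (Nat.div_add_mod _ _).symm⟩
  have hc : ((n : ℝ) + 1) = 6 * q + r := by exact_mod_cast h
  have harg : ((n : ℝ) + 1) * π / 3 = (r : ℝ) * π / 3 + (q : ℤ) * (2 * π) := by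
    rw [hc]; push_cast; ring
  rw [harg, Real.cos_add_int_mul_two_pi]
  interval_cases r
  · rw [if_pos (by omega), if_pos (by omega), if_pos (by omega)]
    norm_num
  · rw [if_neg (by omega), if_neg (by omega), if_neg (by omega)]
    norm_num [Real.cos_pi_div_three]
  · rw [if_neg (by omega), if_neg (by omega), if_pos (by omega)]
    have : ((2 : ℕ) : ℝ) * π / 3 = π - π / 3 := by push_cast; ring
    rw [this, Real.cos_pi_sub, Real.cos_pi_div_three]
    norm_num
  · rw [if_neg (by omega), if_pos (by omega), if_neg (by omega)]
    have : ((3 : ℕ) : ℝ) * π / 3 = π := by push_cast; ring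
    rw [this, Real.cos_pi]
    norm_num
  · rw [if_neg (by omega), if_neg (by omega), if_pos (by omega)]
    have : ((4 : ℕ) : ℝ) * π / 3 = π - (-(π / 3)) := by push_cast; ring
    rw [this, Real.cos_pi_sub, Real.cos_neg, Real.cos_pi_div_three]
    norm_num
  · rw [if_neg (by omega), if_neg (by omega), if_neg (by omega)]
    have : ((5 : ℕ) : ℝ) * π / 3 = -(π / 3) + 2 * π := by push_cast; ring
    rw [this, Real.cos_add_two_pi, Real.cos_neg, Real.cos_pi_div_three]
    norm_num

theorem stmt_10 (s : ℂ) (hs : 1 < s.re) :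
    HasSum (fun n : ℕ => (Real.cos ((n + 1 : ℝ) * π / 3) : ℂ) / (n + 1 : ℂ) ^ s)
      ((1 / 2) * ((6 : ℂ) ^ (1 - s) - (3 : ℂ) ^ (1 - s) - (2 : ℂ) ^ (1 - s) + 1) *
        riemannZeta s) := by
  have h6 := auxdiv s hs 6 (by norm_num)
  have h3 := auxdiv s hs 3 (by norm_num)
  have h2 := auxdiv s hs 2 (by norm_num)
  have hb := base s hs
  have H := (((h6.mul_left 3).sub (h3.mul_left (3 / 2))).sub h2).add (hb.mul_left (1 / 2))
  have hfun : (fun n : ℕ => (Real.cos ((n + 1 : ℝ) * π / 3) : ℂ) / (n + 1 : ℂ) ^ s) =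
      fun n : ℕ =>
        3 * (if 6 ∣ (n + 1) then 1 / ((n : ℂ) + 1) ^ s else 0) -
            (3 / 2) * (if 3 ∣ (n + 1) then 1 / ((n : ℂ) + 1) ^ s else 0) -
          (if 2 ∣ (n + 1) then 1 / ((n : ℂ) + 1) ^ s else 0) +
          1 / 2 * (1 / ((n : ℂ) + 1) ^ s) := by
    funext n
    rw [div_eq_mul_one_div, key n]
    split_ifs <;> ring
  have hval : 3 * (1 / (6 : ℂ) ^ s * riemannZeta s) -
        3 / 2 * (1 / (3 : ℂ) ^ s * riemannZeta s) - 1 / (2 : ℂ) ^ s * riemannZeta s +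
        1 / 2 * riemannZeta s =
      (1 / 2) * ((6 : ℂ) ^ (1 - s) - (3 : ℂ) ^ (1 - s) - (2 : ℂ) ^ (1 - s) + 1) *
        riemannZeta s := by
    rw [Complex.cpow_sub _ _ (by norm_num : (6 : ℂ) ≠ 0),
      Complex.cpow_sub _ _ (by norm_num : (3 : ℂ) ≠ 0),
      Complex.cpow_sub _ _ (by norm_num : (2 : ℂ) ≠ 0), Complex.cpow_one,
      Complex.cpow_one, Complex.cpow_one]
    ring
  rw [hfun, ← hval]
  exact H
end

section
/- For every positive integer r, ∑_{n=1}^∞ cos(nπ/3)/n^{2r+1} = (1/2 + 1/(2^{2r+1}·3^{2r}) − 1/2^{2r+1} − 1/(2·3^{2r})) ζ(2r+1). -/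
open Real

lemma hasSum_zetaR (s : ℕ) (hs : 2 ≤ s) :
    HasSum (fun n : ℕ => 1 / ((n : ℝ) + 1) ^ s) (zetaR s) := by
  have h : Summable (fun n : ℕ => 1 / (n : ℝ) ^ s) :=
    summable_one_div_nat_pow.mpr hs
  have h2 : Summable (fun n : ℕ => 1 / ((n : ℝ) + 1) ^ s) := by
    have h3 := h.comp_injective (add_left_injective 1)
    apply h3.congr
    intro n
    simp only [Function.comp]
    push_cast
    ring
  simpa [zetaR] using h2.hasSum

lemma hasSum_mult (s k : ℕ) (hs : 2 ≤ s) (hk : 0 < k) :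
    HasSum (fun n : ℕ => if k ∣ (n + 1) then 1 / ((n : ℝ) + 1) ^ s else 0)
      (1 / (k : ℝ) ^ s * zetaR s) := by
  set i : ℕ → ℕ := fun m => k * m + (k - 1) with hi
  have hinj : Function.Injective i := by
    intro a b hab
    simp only [hi] at hab
    exact Nat.eq_of_mul_eq_mul_left hk (Nat.add_right_cancel hab)
  have hrange : ∀ x, x ∉ Set.range i →
      (if k ∣ (x + 1) then 1 / ((x : ℝ) + 1) ^ s else 0) = 0 := by
    intro x hx
    rw [if_neg]
    rintro ⟨c, hc⟩
    have hc1 : 1 ≤ c := by rcases Nat.eq_zero_or_pos c with h | h; · subst h; omega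
                           · exact h
    obtain ⟨d, rfl⟩ := Nat.exists_eq_add_of_le hc1
    rw [Nat.mul_add, Nat.mul_one] at hc
    exact hx ⟨d, by simp only [hi]; omega⟩
  rw [← hinj.hasSum_iff hrange]
  have hfun : (fun m : ℕ => if k ∣ (i m + 1) then 1 / ((i m : ℝ) + 1) ^ s else 0)
      = fun m : ℕ => (1 / (k : ℝ) ^ s) * (1 / ((m : ℝ) + 1) ^ s) := by
    funext m
    rw [if_pos ⟨m + 1, by simp only [hi]; rw [Nat.mul_add, Nat.mul_one]; omega⟩]
    have hm : ((i m : ℝ) + 1) = (k : ℝ) * ((m : ℝ) + 1) := by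
      have : (i m + 1 : ℕ) = k * (m + 1) := by
        simp only [hi]; rw [Nat.mul_add, Nat.mul_one]; omega
      have := congrArg (fun n : ℕ => (n : ℝ)) this
      push_cast at this
      linarith
    rw [hm, mul_pow]
    field_simp
  show HasSum (fun m : ℕ => if k ∣ (i m + 1) then 1 / ((i m : ℝ) + 1) ^ s else 0) _
  rw [hfun]
  exact (hasSum_zetaR s hs).mul_left _

lemma cos_eq (m : ℕ) : Real.cos ((m : ℝ) * π / 3) =
    1 / 2 - (if 2 ∣ m then (1 : ℝ) else 0) - (3 / 2) * (if 3 ∣ m then (1 : ℝ) else 0)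
      + 3 * (if 6 ∣ m then (1 : ℝ) else 0) := by
  obtain ⟨q, t, ht, rfl⟩ : ∃ q t, t < 6 ∧ m = 6 * q + t :=
    ⟨m / 6, m % 6, Nat.mod_lt _ (by norm_num), by omega⟩
  have key : ((6 * q + t : ℕ) : ℝ) * π / 3 = (t : ℝ) * π / 3 + (q : ℕ) * (2 * π) := by
    push_cast; ring
  rw [key, Real.cos_add_nat_mul_two_pi]
  interval_cases t
  · rw [if_pos (by omega), if_pos (by omega), if_pos (by omega)]
    norm_num
  · rw [if_neg (by omega), if_neg (by omega), if_neg (by omega)]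
    norm_num [Real.cos_pi_div_three]
  · rw [if_pos (by omega), if_neg (by omega), if_neg (by omega)]
    have : ((2 : ℕ) : ℝ) * π / 3 = π - π / 3 := by push_cast; ring
    rw [this, Real.cos_pi_sub, Real.cos_pi_div_three]
    norm_num
  · rw [if_neg (by omega), if_pos (by omega), if_neg (by omega)]
    have : ((3 : ℕ) : ℝ) * π / 3 = π := by push_cast; ring
    rw [this, Real.cos_pi]
    norm_num
  · rw [if_pos (by omega), if_neg (by omega), if_neg (by omega)]
    have : ((4 : ℕ) : ℝ) * π / 3 = π / 3 + π := by push_cast; ring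
    rw [this, Real.cos_add_pi, Real.cos_pi_div_three]
    norm_num
  · rw [if_neg (by omega), if_neg (by omega), if_neg (by omega)]
    have : ((5 : ℕ) : ℝ) * π / 3 = 2 * π - π / 3 := by push_cast; ring
    rw [this, Real.cos_two_pi_sub, Real.cos_pi_div_three]
    norm_num

theorem stmt_13 (r : ℕ) (hr : 0 < r) :
    HasSum (fun n : ℕ => Real.cos ((n + 1 : ℝ) * π / 3) / (n + 1 : ℝ) ^ (2 * r + 1))
      ((1 / 2 + 1 / (2 ^ (2 * r + 1) * 3 ^ (2 * r)) - 1 / 2 ^ (2 * r + 1)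
          - 1 / (2 * 3 ^ (2 * r))) * zetaR (2 * r + 1)) := by
  set s := 2 * r + 1 with hsdef
  have hs : 2 ≤ s := by omega
  have h1 := (hasSum_zetaR s hs).mul_left (1 / 2 : ℝ)
  have h2 := hasSum_mult s 2 hs (by norm_num)
  have h3 := (hasSum_mult s 3 hs (by norm_num)).mul_left (3 / 2 : ℝ)
  have h6 := (hasSum_mult s 6 hs (by norm_num)).mul_left (3 : ℝ)
  have H := ((h1.sub h2).sub h3).add h6
  have hfun : (fun n : ℕ => Real.cos ((n + 1 : ℝ) * π / 3) / (n + 1 : ℝ) ^ s)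
      = fun n : ℕ =>
        (1 / 2 * (1 / ((n : ℝ) + 1) ^ s)
          - (if 2 ∣ (n + 1) then 1 / ((n : ℝ) + 1) ^ s else 0)
          - 3 / 2 * (if 3 ∣ (n + 1) then 1 / ((n : ℝ) + 1) ^ s else 0))
          + 3 * (if 6 ∣ (n + 1) then 1 / ((n : ℝ) + 1) ^ s else 0) := by
    funext n
    have hc : ((n : ℝ) + 1) = ((n + 1 : ℕ) : ℝ) := by push_cast; ring
    rw [show ((n : ℕ) + 1 : ℝ) * π / 3 = ((n + 1 : ℕ) : ℝ) * π / 3 by push_cast; ring,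
      cos_eq (n + 1)]
    split_ifs <;> ring
  rw [hfun]
  have hconst :
      (1 / 2 + 1 / (2 ^ s * 3 ^ (2 * r)) - 1 / 2 ^ s - 1 / (2 * 3 ^ (2 * r)))
          * zetaR s
      = (1 / 2 * zetaR s - 1 / (2 : ℝ) ^ s * zetaR s
          - 3 / 2 * (1 / (3 : ℝ) ^ s * zetaR s)) + 3 * (1 / (6 : ℝ) ^ s * zetaR s) := by
    have h2s : (2 : ℝ) ^ s ≠ 0 := by positivity
    have h3r : (3 : ℝ) ^ (2 * r) ≠ 0 := by positivity
    have e3 : (3 : ℝ) ^ s = 3 * 3 ^ (2 * r) := by rw [hsdef, pow_succ]; ring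
    have e6 : (6 : ℝ) ^ s = 2 ^ s * (3 * 3 ^ (2 * r)) := by
      rw [← e3, ← mul_pow]; norm_num
    rw [e3, e6]
    field_simp
    ring
  rw [hconst]
  exact H
end

section
/- For every positive integer r, ∑_{k=0}^{r−1} (−1)^k (π/2)^{2k} λ(2r−2k)/(2k)! = (−1)^{r−1} (π/2)^{2r}/(2·(2r−1)!), where λ(s) = ∑_{n=0}^∞ 1/(2n+1)^s. -/
/-!
Euler's formula for `ζ(2m)` and `λ(2m) = (1 - 4⁻ᵐ) ζ(2m)` give
`λ(2m) = (-1)^(m+1) (π/2)^(2m) (16^m - 4^m) B_{2m} / (2 (2m)!)`, so after cancelling the common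
factor `(-1)^(r-1) (π/2)^(2r) / 2` the identity is a statement about Bernoulli numbers: the
coefficient of `X^(2r)` in `cosh X · X tanh X = X sinh X`. Writing `B(t) = t / (e^t - 1)` for the
Bernoulli generating function, `X tanh X = B(4X) - B(2X) + X`, whose coefficient of `X^(2m)` is
`(16^m - 4^m) B_{2m} / (2m)!`.
-/

open Real

/-- The Dirichlet lambda function at natural arguments, as a real series. -/
noncomputable def lambdaR (s : ℕ) : ℝ := ∑' n : ℕ, 1 / (2 * n + 1 : ℝ) ^ s

open PowerSeries Finset Nat

theorem rescale_bernoulliPowerSeries_mul_exp_pow_sub_one {A : Type*} [CommRing A]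
    [Algebra ℚ A] (k : ℕ) :
    rescale (k : A) (bernoulliPowerSeries A) * (exp A ^ k - 1) = (k : A⟦X⟧) * X := by
  have h := congrArg (rescale (k : A)) (bernoulliPowerSeries_mul_exp_sub_one A)
  rwa [map_mul, map_sub, map_one, rescale_X, map_natCast, ← exp_pow_eq_rescale_exp] at h

theorem exp_pow_sub_one_ne_zero {k : ℕ} (hk : k ≠ 0) : exp ℚ ^ k - 1 ≠ 0 := by
  intro h
  have h1 := congrArg (coeff 1) h
  simp [exp_pow_eq_rescale_exp, coeff_rescale, coeff_exp, hk] at h1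

theorem coeff_rescale_bernoulliPowerSeries (c : ℚ) (n : ℕ) :
    coeff n (rescale c (bernoulliPowerSeries ℚ)) = c ^ n * bernoulli n / n ! := by
  simp [coeff_rescale, bernoulliPowerSeries, mul_div_assoc]

theorem coeff_two_mul_mul_of_coeff_odd_eq_zero {R : Type*} [Semiring R] {g : R⟦X⟧}
    (hg : ∀ j, coeff (2 * j + 1) g = 0) (f : R⟦X⟧) (n : ℕ) :
    coeff (2 * n) (f * g) = ∑ p ∈ antidiagonal n, coeff (2 * p.1) f * coeff (2 * p.2) g := by
  let double : ℕ × ℕ ↪ ℕ × ℕ :=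
    ⟨fun p => (2 * p.1, 2 * p.2), fun p q h => by simp only [Prod.mk.injEq] at h; ext <;> omega⟩
  have hsub : (antidiagonal n).map double ⊆ antidiagonal (2 * n) := fun q hq => by
    obtain ⟨p, hp, rfl⟩ := mem_map.1 hq
    rw [HasAntidiagonal.mem_antidiagonal] at hp ⊢
    change 2 * p.1 + 2 * p.2 = 2 * n
    omega
  have hodd : ∀ q ∈ antidiagonal (2 * n), q ∉ (antidiagonal n).map double → Odd q.2 := by
    intro q hq hq'
    rw [Nat.odd_iff]
    by_contra hev
    refine hq' (mem_map.2 ⟨(q.1 / 2, q.2 / 2), ?_, ?_⟩) <;>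
      rw [HasAntidiagonal.mem_antidiagonal] at hq
    · rw [HasAntidiagonal.mem_antidiagonal]; omega
    · exact Prod.ext (show 2 * (q.1 / 2) = q.1 by omega) (show 2 * (q.2 / 2) = q.2 by omega)
  rw [coeff_mul, ← sum_subset hsub fun q hq hq' => ?_]
  · exact sum_map _ _ _
  · obtain ⟨j, hj⟩ := hodd q hq hq'
    rw [hj, hg, mul_zero]

noncomputable def coshSeries : ℚ⟦X⟧ := C (2⁻¹ : ℚ) * (exp ℚ + evalNegHom (exp ℚ))

noncomputable def sinhSeries : ℚ⟦X⟧ := C (2⁻¹ : ℚ) * (exp ℚ - evalNegHom (exp ℚ))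

noncomputable def xTanhSeries : ℚ⟦X⟧ :=
  rescale 4 (bernoulliPowerSeries ℚ) - rescale 2 (bernoulliPowerSeries ℚ) + X

theorem C_inv_two_mul_two : C (2⁻¹ : ℚ) * 2 = 1 := by
  rw [← map_ofNat C 2, ← map_mul]
  norm_num

theorem coshSeries_mul_two_mul_exp : coshSeries * (2 * exp ℚ) = exp ℚ ^ 2 + 1 := by
  rw [coshSeries]
  linear_combination (exp ℚ ^ 2 + 1) * C_inv_two_mul_two +
    2 * C (2⁻¹ : ℚ) * exp_mul_exp_neg_eq_one (A := ℚ)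

theorem sinhSeries_mul_two_mul_exp : sinhSeries * (2 * exp ℚ) = exp ℚ ^ 2 - 1 := by
  rw [sinhSeries]
  linear_combination (exp ℚ ^ 2 - 1) * C_inv_two_mul_two -
    2 * C (2⁻¹ : ℚ) * exp_mul_exp_neg_eq_one (A := ℚ)

theorem xTanhSeries_mul_exp_sq_add_one :
    xTanhSeries * (exp ℚ ^ 2 + 1) = X * (exp ℚ ^ 2 - 1) := by
  have h2 := rescale_bernoulliPowerSeries_mul_exp_pow_sub_one (A := ℚ) 2
  have h4 := rescale_bernoulliPowerSeries_mul_exp_pow_sub_one (A := ℚ) 4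
  push_cast at h2 h4
  refine mul_right_cancel₀
    (mul_ne_zero (exp_pow_sub_one_ne_zero two_ne_zero) (exp_pow_sub_one_ne_zero four_ne_zero)) ?_
  rw [xTanhSeries]
  linear_combination ((exp ℚ ^ 2 + 1) * (exp ℚ ^ 2 - 1)) * h4 -
    ((exp ℚ ^ 2 + 1) * (exp ℚ ^ 4 - 1)) * h2

theorem xTanhSeries_mul_coshSeries : xTanhSeries * coshSeries = X * sinhSeries := by
  have h2exp : (2 * exp ℚ : ℚ⟦X⟧) ≠ 0 := by
    intro h
    simpa [map_ofNat] using congrArg constantCoeff h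
  refine mul_right_cancel₀ h2exp ?_
  rw [mul_assoc, coshSeries_mul_two_mul_exp, mul_assoc, sinhSeries_mul_two_mul_exp,
    xTanhSeries_mul_exp_sq_add_one]

theorem coeff_xTanhSeries_two_mul (j : ℕ) :
    coeff (2 * j) xTanhSeries = (16 ^ j - 4 ^ j) * bernoulli (2 * j) / (2 * j)! := by
  have h1 : 2 * j ≠ 1 := by omega
  simp only [xTanhSeries, map_add, map_sub, coeff_rescale_bernoulliPowerSeries, coeff_X, h1,
    if_false, pow_mul]
  ring

theorem coeff_xTanhSeries_two_mul_add_one (j : ℕ) : coeff (2 * j + 1) xTanhSeries = 0 := by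
  simp only [xTanhSeries, map_add, map_sub, coeff_rescale_bernoulliPowerSeries, coeff_X]
  rcases j.eq_zero_or_pos with rfl | hj
  · norm_num
  · rw [bernoulli_eq_zero_of_odd (odd_two_mul_add_one j) (by omega), if_neg (by omega)]
    ring

theorem coeff_coshSeries_two_mul (k : ℕ) : coeff (2 * k) coshSeries = ((2 * k)! : ℚ)⁻¹ := by
  simp [coshSeries, evalNegHom, coeff_C_mul, coeff_rescale, coeff_exp, pow_mul]
  ring

theorem coeff_sinhSeries_two_mul_add_one (k : ℕ) :
    coeff (2 * k + 1) sinhSeries = ((2 * k + 1)! : ℚ)⁻¹ := by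
  simp [sinhSeries, evalNegHom, coeff_C_mul, coeff_rescale, coeff_exp, pow_succ, pow_mul]
  ring

theorem sum_range_sixteen_pow_sub_four_pow_mul_bernoulli {r : ℕ} (hr : 0 < r) :
    ∑ k ∈ range r, (16 ^ (r - k) - 4 ^ (r - k)) * bernoulli (2 * (r - k))
        / ((2 * k)! * (2 * (r - k))!) = ((2 * r - 1)! : ℚ)⁻¹ := by
  obtain ⟨n, rfl⟩ := Nat.exists_eq_add_one_of_ne_zero hr.ne'
  have h := congrArg (coeff (2 * (n + 1))) xTanhSeries_mul_coshSeries
  rw [mul_comm xTanhSeries,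
    coeff_two_mul_mul_of_coeff_odd_eq_zero coeff_xTanhSeries_two_mul_add_one,
    Nat.sum_antidiagonal_eq_sum_range_succ_mk, sum_range_succ, Nat.sub_self,
    coeff_xTanhSeries_two_mul 0, show 2 * (n + 1) = 2 * n + 1 + 1 by ring, coeff_succ_X_mul,
    coeff_sinhSeries_two_mul_add_one] at h
  simp only [coeff_coshSeries_two_mul, coeff_xTanhSeries_two_mul, pow_zero, sub_self, zero_mul,
    zero_div, mul_zero, add_zero] at h
  rw [show 2 * (n + 1) - 1 = 2 * n + 1 by omega, ← h]
  exact sum_congr rfl fun k _ => by ring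

theorem lambdaR_eq_of_hasSum {s : ℕ} {z : ℝ} (h : HasSum (fun n : ℕ => 1 / (n : ℝ) ^ s) z) :
    lambdaR s = (1 - (2 ^ s)⁻¹) * z := by
  have heven : HasSum (fun n : ℕ => 1 / ((2 * n : ℕ) : ℝ) ^ s) ((2 ^ s)⁻¹ * z) := by
    have hf : (fun n : ℕ => 1 / ((2 * n : ℕ) : ℝ) ^ s) =
        fun n : ℕ => (2 ^ s)⁻¹ * (1 / (n : ℝ) ^ s) := by
      ext n
      rw [Nat.cast_mul, Nat.cast_two, mul_pow, one_div, one_div, mul_inv]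
    exact hf ▸ h.mul_left _
  have hodd : HasSum (fun n : ℕ => 1 / ((2 * n + 1 : ℕ) : ℝ) ^ s) (lambdaR s) := by
    have hinj : Function.Injective (fun n : ℕ => 2 * n + 1) := fun a b hab => by
      simp only at hab; omega
    have hsum : Summable (fun n : ℕ => 1 / (2 * n + 1 : ℝ) ^ s) := by
      simpa [Function.comp_def] using h.summable.comp_injective hinj
    push_cast
    exact hsum.hasSum
  linear_combination -h.unique (heven.even_add_odd hodd)

theorem lambdaR_two_mul {m : ℕ} (hm : m ≠ 0) :
    lambdaR (2 * m) = (-1) ^ (m + 1) * (π / 2) ^ (2 * m) / 2 *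
      ((16 ^ m - 4 ^ m) * bernoulli (2 * m) / (2 * m)! : ℚ) := by
  rw [lambdaR_eq_of_hasSum (hasSum_zeta_nat hm)]
  set q : ℝ := 2 ^ (2 * m) with hq
  have h4 : (4 : ℝ) ^ m = q := by rw [hq, pow_mul]; norm_num
  have h16 : (16 : ℝ) ^ m = q ^ 2 := by rw [← h4, ← pow_mul, mul_comm, pow_mul]; norm_num
  have hpi : π ^ (2 * m) = (π / 2) ^ (2 * m) * q := by
    rw [hq, ← mul_pow, div_mul_cancel₀ _ two_ne_zero]
  have h2 : (2 : ℝ) ^ (2 * m - 1) = q / 2 := by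
    rw [hq, eq_div_iff two_ne_zero, ← pow_succ, Nat.sub_add_cancel (by omega)]
  have hq0 : q ≠ 0 := by positivity
  push_cast
  rw [h16, h4, hpi, h2]
  field_simp

theorem stmt_16 (r : ℕ) (hr : 0 < r) :
    ∑ k ∈ Finset.range r,
        (-1 : ℝ) ^ k * (π / 2) ^ (2 * k) * lambdaR (2 * r - 2 * k) / (Nat.factorial (2 * k))
      = (-1 : ℝ) ^ (r - 1) * (π / 2) ^ (2 * r) / (2 * (Nat.factorial (2 * r - 1))) := by
  have hterm : ∀ k ∈ range r,
      (-1 : ℝ) ^ k * (π / 2) ^ (2 * k) * lambdaR (2 * r - 2 * k) / (2 * k)! =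
        (-1) ^ (r - 1) * (π / 2) ^ (2 * r) / 2 *
          (((16 ^ (r - k) - 4 ^ (r - k)) * bernoulli (2 * (r - k))
            / ((2 * k)! * (2 * (r - k))!) : ℚ) : ℝ) := by
    intro k hk
    obtain ⟨m, rfl⟩ := Nat.exists_eq_add_of_lt (mem_range.1 hk)
    rw [show 2 * (k + m + 1) - 2 * k = 2 * (m + 1) by omega, show k + m + 1 - k = m + 1 by omega,
      show k + m + 1 - 1 = k + m by omega, lambdaR_two_mul (m := m + 1) (by omega)]
    push_cast
    ring
  rw [sum_congr rfl hterm, ← mul_sum, ← Rat.cast_sum,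
    sum_range_sixteen_pow_sub_four_pow_mul_bernoulli hr]
  push_cast
  field_simp
end

section
/- The series ∑_{n=1}^∞ (−1)^{⌊n/2⌋}/(2n−1)^2 converges to √2 · π²/16. -/
open Real

lemma Ssum {x : ℝ} (hx : x ∈ Set.Icc (0:ℝ) 1) :
    HasSum (fun n : ℕ => 1 / (n : ℝ) ^ 2 * Real.cos (2 * π * n * x))
      (π ^ 2 * (x ^ 2 - x + 1/6)) := by
  have h := hasSum_one_div_nat_pow_mul_cos (k := 1) one_ne_zero hx
  have hb : ((Polynomial.bernoulli 2).map (algebraMap ℚ ℝ)).eval x = x^2 - x + 1/6 := by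
    have h2 : (_root_.bernoulli 2 : ℚ) = 1/6 := by
      rw [bernoulli_eq_bernoulli'_of_ne_one (by decide), bernoulli'_two]
    simp [Polynomial.bernoulli, Finset.sum_range_succ, h2]
    ring
  norm_num [hb] at h
  convert h using 2 <;> ring

lemma coskey (n : ℕ) :
    Real.cos (2 * π * (2 * (n:ℝ) + 1) * (1/8)) = (-1 : ℝ) ^ ((n + 1) / 2) * (Real.sqrt 2 / 2) := by
  induction n using Nat.strong_induction_on with
  | _ n ih =>
    match n with
    | 0 =>
        rw [show 2*π*(2*((0:ℕ):ℝ)+1)*(1/8) = π/4 by push_cast; ring, Real.cos_pi_div_four]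
        norm_num
    | 1 =>
        rw [show 2*π*(2*((1:ℕ):ℝ)+1)*(1/8) = π - π/4 by push_cast; ring, Real.cos_pi_sub,
          Real.cos_pi_div_four]
        norm_num
    | 2 =>
        rw [show 2*π*(2*((2:ℕ):ℝ)+1)*(1/8) = π/4 + π by push_cast; ring, Real.cos_add_pi,
          Real.cos_pi_div_four]
        norm_num
    | 3 =>
        rw [show 2*π*(2*((3:ℕ):ℝ)+1)*(1/8) = 2*π - π/4 by push_cast; ring, Real.cos_two_pi_sub,
          Real.cos_pi_div_four]
        norm_num
    | (m+4) =>
        rw [show 2*π*(2*((m+4:ℕ):ℝ)+1)*(1/8) = 2*π*(2*(m:ℝ)+1)*(1/8) + 2*π by push_cast; ring,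
          Real.cos_add_two_pi, ih m (by omega), show (m + 4 + 1) / 2 = (m + 1) / 2 + 2 from by omega,
          pow_add]
        norm_num

set_option maxHeartbeats 1000000 in
theorem stmt_17 :
    HasSum (fun n : ℕ => (-1 : ℝ) ^ ((n + 1) / 2) / (2 * (n + 1 : ℝ) - 1) ^ 2)
      (Real.sqrt 2 * π ^ 2 / 16) := by
  have h8 := Ssum (x := 1/8) (by norm_num)
  have h4 := Ssum (x := 1/4) (by norm_num)
  have hfe : ∀ j : ℕ, 1 / (((2*j : ℕ)):ℝ)^2 * Real.cos (2*π*((2*j:ℕ):ℝ)*(1/8))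
      = (1 / (j:ℝ)^2 * Real.cos (2*π*(j:ℝ)*(1/4))) / 4 := by
    intro j
    rw [show (2*π*((2*j:ℕ):ℝ)*(1/8)) = 2*π*(j:ℝ)*(1/4) by push_cast; ring]
    push_cast
    ring
  have heven : HasSum (fun j : ℕ => 1 / (((2*j : ℕ)):ℝ)^2 * Real.cos (2*π*((2*j:ℕ):ℝ)*(1/8)))
      ((π ^ 2 * ((1/4:ℝ) ^ 2 - 1/4 + 1/6)) / 4) := by
    simp only [hfe]
    exact h4.div_const 4
  have hodds : Summable (fun j : ℕ => 1/(((2*j+1:ℕ)):ℝ)^2 * Real.cos (2*π*((2*j+1:ℕ):ℝ)*(1/8))) :=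
    h8.summable.comp_injective (fun a b h => by omega)
  obtain ⟨b, hb⟩ := hodds
  have htot := HasSum.even_add_odd (f := fun n : ℕ => 1/((n:ℕ):ℝ)^2 * Real.cos (2*π*((n:ℕ):ℝ)*(1/8))) heven hb
  have hbval : b = π^2/16 := by
    have hu := htot.unique h8
    linear_combination hu
  rw [hbval] at hb
  have hterm : ∀ n : ℕ, Real.sqrt 2 * (1/(((2*n+1:ℕ)):ℝ)^2 * Real.cos (2*π*((2*n+1:ℕ):ℝ)*(1/8)))
      = (-1:ℝ)^((n+1)/2) / (2*((n:ℝ)+1) - 1)^2 := by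
    intro n
    rw [show ((2*n+1:ℕ):ℝ) = 2*(n:ℝ)+1 by push_cast; ring, coskey,
      show (2*((n:ℝ)+1) - 1) = 2*(n:ℝ)+1 by ring]
    have h2 : Real.sqrt 2 * Real.sqrt 2 = 2 := Real.mul_self_sqrt (by norm_num)
    rw [show Real.sqrt 2 * (1/(2*(n:ℝ)+1)^2 * ((-1:ℝ)^((n+1)/2) * (Real.sqrt 2/2)))
        = (Real.sqrt 2 * Real.sqrt 2) * ((-1:ℝ)^((n+1)/2)) / 2 / (2*(n:ℝ)+1)^2 by ring, h2]
    ring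
  have hfinal := hb.mul_left (Real.sqrt 2)
  simp only [hterm] at hfinal
  rw [mul_div_assoc]
  exact hfinal
end

section
/- The series ∑_{n=1}^∞ (−1)^{⌊n/2⌋}/(2n−1)^4 converges to √2 · 11π⁴/1536. -/
/-!
Evaluate the Fourier series `∑ cos (2π n x) / n⁴ = -(π⁴/3) B₄(x)` at `x = 1/8` and `x = 1/4`.
The even terms of the first series form one sixteenth of the second, so subtracting leaves the
odd terms `cos ((2m+1) π/4) / (2m+1)⁴ = (√2/2) (-1)^⌊(m+1)/2⌋ / (2m+1)⁴`.
-/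

open Real Set

theorem bernoulliFun_four (x : ℝ) : bernoulliFun 4 x = x ^ 4 - 2 * x ^ 3 + x ^ 2 - 30⁻¹ := by
  simp [bernoulliFun, Polynomial.bernoulli_def, Finset.sum_range_succ, Nat.choose,
    bernoulli_eq_bernoulli'_of_ne_one, bernoulli'_two, bernoulli'_three, bernoulli'_four]
  ring

theorem hasSum_one_div_nat_pow_four_mul_cos {x : ℝ} (hx : x ∈ Icc (0 : ℝ) 1) :
    HasSum (fun n : ℕ => 1 / (n : ℝ) ^ 4 * cos (2 * π * n * x))
      (-(π ^ 4) / 3 * (x ^ 4 - 2 * x ^ 3 + x ^ 2 - 30⁻¹)) := by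
  convert hasSum_one_div_nat_pow_mul_cos two_ne_zero hx using 1
  rw [← bernoulliFun, bernoulliFun_four]
  push_cast [Nat.factorial]
  ring

theorem HasSum.odd_of_even {G : Type*} [AddCommGroup G] [TopologicalSpace G]
    [IsTopologicalAddGroup G] {f : ℕ → G} {a b : G} (hf : HasSum f a)
    (heven : HasSum (fun m => f (2 * m)) b) : HasSum (fun m => f (2 * m + 1)) (a - b) := by
  set e := (range (2 * ·)).indicator f
  have hmul : Function.Injective (2 * · : ℕ → ℕ) := fun _ _ h => by simpa using h
  have hodd : Function.Injective (2 * · + 1 : ℕ → ℕ) := fun _ _ h => by simpa using h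
  have he : HasSum e b := by
    rw [← hmul.hasSum_iff fun n hn => indicator_of_notMem hn f]
    simpa [e, Function.comp_def] using heven
  have hsub := hf.sub he
  rw [← hodd.hasSum_iff] at hsub
  · simpa [e, Function.comp_def, indicator_of_notMem, ← Nat.odd_iff, Nat.even_add_one,
      ← even_iff_two_dvd] using hsub
  · rintro n hn
    obtain ⟨m, rfl⟩ : Even n := by
      simpa [Nat.even_iff, eq_comm] using hn
    simp [e, ← two_mul]

theorem cos_odd_mul_pi_div_four (n : ℕ) :
    cos ((2 * n + 1) * π / 4) = (-1) ^ ((n + 1) / 2) * (√2 / 2) := by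
  induction n using Nat.twoStepInduction with
  | zero => simp [cos_pi_div_four]
  | one =>
    rw [show (2 * ((1 : ℕ) : ℝ) + 1) * π / 4 = π - π / 4 by push_cast; ring, cos_pi_sub,
      cos_pi_div_four]
    norm_num
  | more n ih _ =>
    rw [show (2 * ((n + 2 : ℕ) : ℝ) + 1) * π / 4 = (2 * n + 1) * π / 4 + π by push_cast; ring,
      cos_add_pi, ih, show (n + 2 + 1) / 2 = (n + 1) / 2 + 1 by omega, pow_succ]
    ring

theorem stmt_18 :
    HasSum (fun n : ℕ => (-1 : ℝ) ^ ((n + 1) / 2) / (2 * (n + 1 : ℝ) - 1) ^ 4)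
      (Real.sqrt 2 * (11 * π ^ 4) / 1536) := by
  have hA := hasSum_one_div_nat_pow_four_mul_cos (x := 1 / 8) (by norm_num)
  have hB := hasSum_one_div_nat_pow_four_mul_cos (x := 1 / 4) (by norm_num)
  have hEven := (hB.div_const 16).congr_fun fun m : ℕ =>
    show 1 / ((2 * m : ℕ) : ℝ) ^ 4 * cos (2 * π * (2 * m : ℕ) * (1 / 8)) = _ by
      push_cast
      rw [show 2 * π * (2 * m) * (1 / 8 : ℝ) = 2 * π * m * (1 / 4) by ring]
      ring
  have hOdd := (hA.odd_of_even hEven).mul_left √2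
  rw [show √2 * (_ - _ : ℝ) = √2 * (11 * π ^ 4) / 1536 by ring] at hOdd
  refine hOdd.congr_fun fun n => ?_
  have hs : √2 * √2 = 2 := mul_self_sqrt zero_le_two
  rw [show 2 * π * ((2 * n + 1 : ℕ) : ℝ) * (1 / 8) = (2 * n + 1) * π / 4 by push_cast; ring,
    cos_odd_mul_pi_div_four]
  push_cast
  linear_combination (-((-1 : ℝ) ^ ((n + 1) / 2) / (2 * (n : ℝ) + 1) ^ 4 / 2)) * hs
end
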